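/- arXiv:2401.05114 — 2 statements merged into one kernel-verified Lean document; each statement's English description precedes it below -/
import Mathlib

section
/- Let Θ ⊆ ℝ^m be a closed rectangle and F: Θ → ℝ^m a continuously differentiable map whose Jacobian matrix ∇F(θ) is a P-matrix (all principal minors positive) at every θ ∈ Θ. Then F is injective on Θ. -/
/-!
Flipping the signs of the coordinates in which `x` lies below `y` keeps the domain a rectangle and
the Jacobian a P-matrix, so it suffices to show that `y < x` forces `y i < x i` and
`F y i < F x i` for some `i`. This is proved by strong induction on the number of coordinates in
which `y i < x i`. If it failed for `y < x`, minimise `∑ i, (z i - y i)` over the compact set of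
`z ∈ [y, x]` with `F z i ≤ F y i` on those coordinates and with the sum at least `δ`: by induction
a minimiser lies strictly above `y` on all of them, and moving from it along `-u`, where `u ≥ 0`
and `J u > 0` there (such `u` exist for P-matrices), would lower the sum, so the minimum is `δ`.
Hence these points accumulate at `y`, and a positive tangent direction `v ≥ 0, v ≠ 0` at `y`
satisfies `(J y *ᵥ v) i ≤ 0` wherever `v i > 0`, which no P-matrix allows.
-/

open Matrix Set

open Filter Topology

namespace Matrix

section Determinant

variable {n R : Type*} [Fintype n] [DecidableEq n] [CommRing R]

theorem det_of_ite_mem_one (B : Matrix n n R) (s : Finset n) :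
    (of fun i j => if i ∈ s then B i j else (1 : Matrix n n R) i j).det =
      (B.submatrix (fun i : s => (i : n)) (fun j : s => (j : n))).det := by
  rw [← det_submatrix_equiv_self (Equiv.sumCompl (· ∈ s)),
    show (of fun i j => if i ∈ s then B i j else (1 : Matrix n n R) i j).submatrix
        (Equiv.sumCompl (· ∈ s)) (Equiv.sumCompl (· ∈ s)) =
      fromBlocks (B.submatrix (↑) (↑)) (B.submatrix (↑) (↑)) 0 1 by
    ext (i | i) (j | j)
    · simp [i.2]
    · simp [i.2]
    · have : (i : n) ≠ j := fun h => i.2 (h ▸ j.2)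
      simp [i.2, one_apply, this]
    · simp [i.2, one_apply, Subtype.ext_iff],
    det_fromBlocks_zero₂₁, det_one, mul_one]

theorem det_of_ite_mem_diagonal (B : Matrix n n R) (d : n → R) (s : Finset n) :
    (of fun i j => if i ∈ s then B i j else diagonal d i j).det =
      (∏ i ∈ sᶜ, d i) * (B.submatrix (fun i : s => (i : n)) (fun j : s => (j : n))).det := by
  have hrows : (of fun i j => if i ∈ s then B i j else diagonal d i j) =
      of fun i j => (if i ∈ s then 1 else d i) *
        (of fun i j => if i ∈ s then B i j else (1 : Matrix n n R) i j : Matrix n n R) i j := by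
    ext i j
    by_cases hi : i ∈ s <;> simp [hi, diagonal_apply, one_apply]
  rw [hrows, det_mul_column, det_of_ite_mem_one]
  simp [Finset.prod_ite, Finset.filter_notMem_eq_sdiff, Finset.compl_eq_univ_sdiff]

theorem det_add_diagonal (B : Matrix n n R) (d : n → R) :
    (B + diagonal d).det = ∑ s : Finset n,
      (∏ i ∈ sᶜ, d i) * (B.submatrix (fun i : s => (i : n)) (fun j : s => (j : n))).det := by
  refine (MultilinearMap.map_add_univ detRowAlternating.toMultilinearMap B (diagonal d)).trans
    (Finset.sum_congr rfl fun s _ => ?_)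
  rw [← det_of_ite_mem_diagonal]
  show (of (s.piecewise B (diagonal d))).det = _
  congr 1
  ext i j
  by_cases hi : i ∈ s <;> simp [Finset.piecewise, hi]

end Determinant

theorem submatrix_mulVec_restrict {n R : Type*} [Fintype n] [NonUnitalNonAssocSemiring R]
    {N : Matrix n n R} {S : Finset n} {u : n → R} (hu : ∀ i ∉ S, u i = 0) (i : S) :
    (N.submatrix (fun i : S => (i : n)) (fun j : S => (j : n)) *ᵥ fun j : S => u j) i =
      (N *ᵥ u) i := by
  simp only [mulVec, dotProduct, submatrix_apply]
  rw [Finset.sum_coe_sort S fun j => N i j * u j]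
  exact Finset.sum_subset (Finset.subset_univ S) fun j _ hj => by rw [hu j hj, mul_zero]

def IsPMatrix {n R : Type*} [DecidableEq n] [CommRing R] [PartialOrder R] (N : Matrix n n R) :
    Prop :=
  ∀ s : Finset n, s.Nonempty →
    0 < (N.submatrix (fun i : s => (i : n)) (fun j : s => (j : n))).det

namespace IsPMatrix

section OrderedCommRing

variable {n R : Type*} [DecidableEq n] [CommRing R] [PartialOrder R] {N : Matrix n n R}

theorem transpose (hN : N.IsPMatrix) : Nᵀ.IsPMatrix := fun s hs => by
  rw [← transpose_submatrix, det_transpose]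
  exact hN s hs

theorem submatrix (hN : N.IsPMatrix) (S : Finset n) :
    (N.submatrix (fun i : S => (i : n)) (fun j : S => (j : n))).IsPMatrix := by
  intro r hr
  let e : r ≃ r.map (Function.Embedding.subtype (· ∈ S)) := Equiv.ofBijective
    (fun i => ⟨i.1.1, Finset.mem_map_of_mem _ i.2⟩)
    ⟨fun i j h => by
      have := congrArg Subtype.val h
      ext
      exact this, fun ⟨i, hi⟩ => by
      obtain ⟨j, hj, rfl⟩ := Finset.mem_map.mp hi
      exact ⟨⟨j, hj⟩, rfl⟩⟩
  rw [show (N.submatrix (fun i : S => (i : n)) (fun j : S => (j : n))).submatrix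
      (fun i : r => (i : S)) (fun j : r => (j : S)) =
      (N.submatrix (fun i : r.map _ => (i : n)) (fun j : r.map _ => (j : n))).submatrix e e
      from rfl, det_submatrix_equiv_self]
  exact hN _ hr.map

end OrderedCommRing

section OrderedField

variable {n R : Type*} [DecidableEq n] [Field R] [LinearOrder R] [IsStrictOrderedRing R]
  {N : Matrix n n R}

theorem det_submatrix_pos (hN : N.IsPMatrix) (s : Finset n) :
    0 < (N.submatrix (fun i : s => (i : n)) (fun j : s => (j : n))).det := by
  rcases s.eq_empty_or_nonempty with rfl | hs
  · rw [det_isEmpty]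
    exact one_pos
  · exact hN s hs

variable [Fintype n]

theorem diagonal_mul_mul_diagonal (hN : N.IsPMatrix) {σ : n → R} (hσ : ∀ i, σ i ≠ 0) :
    (diagonal σ * N * diagonal σ).IsPMatrix := by
  intro s hs
  have hsub : (diagonal σ * N * diagonal σ).submatrix (fun i : s => (i : n)) (fun j : s => (j : n))
      = diagonal (fun i : s => σ i) * N.submatrix (fun i : s => (i : n)) (fun j : s => (j : n)) *
        diagonal (fun i : s => σ i) := by
    ext i j
    simp [mul_diagonal, diagonal_mul]
  have hprod : ∏ i : s, σ i ≠ 0 := Finset.prod_ne_zero_iff.mpr fun i _ => hσ i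
  rw [hsub, det_mul, det_mul, det_diagonal, mul_right_comm]
  exact mul_pos (mul_self_pos.mpr hprod) (hN s hs)

theorem det_add_diagonal_pos (hN : N.IsPMatrix) {d : n → R} (hd : 0 ≤ d) :
    0 < (N + diagonal d).det := by
  rw [det_add_diagonal]
  refine Finset.sum_pos' (fun s _ => mul_nonneg (Finset.prod_nonneg fun i _ => hd i)
    (hN.det_submatrix_pos s).le) ⟨Finset.univ, Finset.mem_univ _, ?_⟩
  simpa using hN.det_submatrix_pos Finset.univ

theorem exists_pos_mulVec_pos (hN : N.IsPMatrix) {v : n → R} (hv : 0 ≤ v) (hv0 : v ≠ 0) :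
    ∃ i, 0 < v i ∧ 0 < (N *ᵥ v) i := by
  by_contra! h
  set T := Finset.univ.filter fun i => 0 < v i
  have hvT : ∀ i ∉ T, v i = 0 := fun i hi =>
    le_antisymm (not_lt.mp (by simpa [T] using hi)) (hv i)
  set B := N.submatrix (fun i : T => (i : n)) (fun j : T => (j : n))
  set w : T → R := fun i => v i
  have hw : ∀ i, 0 < w i := fun i => (Finset.mem_filter.mp i.2).2
  have hBw : ∀ i, (B *ᵥ w) i ≤ 0 := fun i =>
    (submatrix_mulVec_restrict hvT i).trans_le (h i (hw i))
  -- `w > 0` is then a kernel vector of `B + diagonal d` for this `d ≥ 0`.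
  set d : T → R := fun i => -(B *ᵥ w) i / w i
  have hker : (B + diagonal d) *ᵥ w = 0 := by
    ext i
    simp [add_mulVec, mulVec_diagonal, d, div_mul_cancel₀ _ (hw i).ne']
  have hw0 : w ≠ 0 := by
    obtain ⟨i, hi⟩ := Function.ne_iff.mp hv0
    have hiT : i ∈ T := by simpa [T] using (hv i).lt_of_ne' hi
    exact fun h0 => (hw ⟨i, hiT⟩).ne' (congrFun h0 _)
  exact ((hN.submatrix T).det_add_diagonal_pos fun i =>
    div_nonneg (neg_nonneg.mpr (hBw i)) (hw i).le).ne'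
      (exists_mulVec_eq_zero_iff.mp ⟨w, hw0, hker⟩)

end OrderedField

end IsPMatrix

end Matrix

theorem nonpos_of_forall_pos_mul_le {𝕜 : Type*} [Field 𝕜] [LinearOrder 𝕜] [IsStrictOrderedRing 𝕜]
    {a b : 𝕜} (h : ∀ t > 0, t * a ≤ b) : a ≤ 0 := by
  by_contra! ha
  have := h ((|b| + 1) / a) (by positivity)
  rw [div_mul_cancel₀ _ ha.ne'] at this
  linarith [le_abs_self b]

namespace Matrix.IsPMatrix

variable {n : Type*} [Fintype n] [DecidableEq n] {N : Matrix n n ℝ}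

theorem exists_nonneg_mulVec_pos (hN : N.IsPMatrix) : ∃ u, 0 ≤ u ∧ ∀ i, 0 < (N *ᵥ u) i := by
  -- Ville's alternative: a functional separating the open positive orthant from the cone
  -- `N *ᵥ (≥ 0)` is given by some `w ≤ 0`, `w ≠ 0`, with `Nᵀ *ᵥ w ≥ 0`; then `-w` contradicts
  -- `exists_pos_mulVec_pos` for `Nᵀ`.
  by_contra! h
  obtain ⟨f, c, hfP, hfQ⟩ := geometric_hahn_banach_open (s := univ.pi fun _ => Ioi 0)
    (t := N.mulVecLin '' Ici 0) (convex_pi fun _ _ => convex_Ioi 0)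
    (isOpen_set_pi finite_univ fun _ _ => isOpen_Ioi) ((convex_Ici 0).linear_image _)
    (disjoint_left.mpr fun z hz ⟨u, hu, hzu⟩ => by
      subst hzu
      obtain ⟨i, hi⟩ := h u hu
      exact (show 0 < (N *ᵥ u) i from hz i (mem_univ i)).not_ge hi)
  set w : n → ℝ := fun i => f (Pi.single i 1)
  have hf : ∀ z, f z = w ⬝ᵥ z := fun z => by
    conv_lhs => rw [← Finset.univ_sum_single z]
    rw [map_sum, dotProduct]
    refine Finset.sum_congr rfl fun i _ => ?_
    rw [mul_comm, ← smul_eq_mul, ← map_smul, ← Pi.single_smul, smul_eq_mul, mul_one]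
  have hsingle : ∀ (i : n) {t : ℝ}, 0 < t → 0 ≤ t • Pi.single i (1 : ℝ) := fun i t ht =>
    smul_nonneg ht.le (Pi.single_nonneg.mpr (zero_le_one' ℝ))
  have hNw : ∀ j, 0 ≤ (Nᵀ *ᵥ w) j := fun j => by
    refine neg_nonpos.mp (nonpos_of_forall_pos_mul_le (b := -c) fun t ht => ?_)
    have := hfQ _ ⟨t • Pi.single j 1, hsingle j ht, rfl⟩
    rw [hf, mulVecLin_apply, dotProduct_mulVec, ← mulVec_transpose, dotProduct_smul,
      dotProduct_single, smul_eq_mul, mul_one] at this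
    linarith
  have hw : ∀ i, w i ≤ 0 := fun i => by
    refine nonpos_of_forall_pos_mul_le (b := c - f 1) fun t ht => ?_
    have := hfP (1 + t • Pi.single i 1) fun j _ => add_pos_of_pos_of_nonneg one_pos (hsingle i ht j)
    rw [map_add, map_smul, smul_eq_mul] at this
    linarith
  have hw0 : -w ≠ 0 := by
    intro h0
    have hc : c ≤ 0 := by simpa using hfQ 0 ⟨0, self_mem_Ici, by simp⟩
    have := hfP 1 fun _ _ => by simp
    rw [hf, neg_eq_zero.mp h0, zero_dotProduct] at this
    linarith
  obtain ⟨j, -, hNj⟩ := hN.transpose.exists_pos_mulVec_pos (neg_nonneg.mpr hw) hw0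
  rw [mulVec_neg] at hNj
  exact (hNw j).not_gt (neg_pos.mp hNj)

theorem exists_nonneg_mulVec_pos_on (hN : N.IsPMatrix) (S : Finset n) :
    ∃ u, 0 ≤ u ∧ (∀ i ∉ S, u i = 0) ∧ ∀ i ∈ S, 0 < (N *ᵥ u) i := by
  obtain ⟨u₀, hu₀, hNu₀⟩ := (hN.submatrix S).exists_nonneg_mulVec_pos
  set u : n → ℝ := fun i => if h : i ∈ S then u₀ ⟨i, h⟩ else 0
  have hu : ∀ i ∉ S, u i = 0 := fun i hi => dif_neg hi
  refine ⟨u, fun i => ?_, hu, fun i hi => ?_⟩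
  · by_cases hi : i ∈ S
    · simpa [u, hi] using hu₀ ⟨i, hi⟩
    · simp [u, hi]
  · rw [← submatrix_mulVec_restrict hu ⟨i, hi⟩]
    convert hNu₀ ⟨i, hi⟩ with j
    exact dif_pos j.2

end Matrix.IsPMatrix

section TangentCone

variable {E F : Type*} [NormedAddCommGroup E] [NormedSpace ℝ E] [NormedAddCommGroup F]
  [NormedSpace ℝ F] {s : Set E} {x : E}

theorem exists_ne_zero_mem_posTangentConeAt [ProperSpace E] (hx : AccPt x (𝓟 s)) :
    ∃ v ≠ 0, v ∈ posTangentConeAt s x := by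
  have hseq : ∀ n : ℕ, ∃ y ∈ s, y ≠ x ∧ ‖y - x‖ < 1 / (n + 1) := fun n => by
    obtain ⟨y, ⟨hyb, hys⟩, hyx⟩ :=
      accPt_iff_nhds.mp hx _ (Metric.ball_mem_nhds x (Nat.one_div_pos_of_nat (α := ℝ)))
    exact ⟨y, hys, hyx, by rwa [Metric.mem_ball, dist_eq_norm] at hyb⟩
  choose y hys hyx hyd using hseq
  have hsphere : ∀ n, ‖y n - x‖₊⁻¹ • (y n - x) ∈ Metric.sphere (0 : E) 1 := fun n => by
    simp [NNReal.smul_def, norm_smul, sub_ne_zero.mpr (hyx n)]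
  obtain ⟨v, hv, φ, hφ, hlim⟩ := (isCompact_sphere (0 : E) 1).tendsto_subseq hsphere
  refine ⟨v, ne_zero_of_mem_unit_sphere ⟨v, hv⟩, mem_tangentConeAt_of_seq atTop
    (fun n => ‖y (φ n) - x‖₊⁻¹) (fun n => y (φ n) - x) ?_ (.of_forall fun n => ?_) hlim⟩
  · exact (squeeze_zero_norm (fun n => (hyd n).le) tendsto_one_div_add_atTop_nhds_zero_nat).comp
      hφ.tendsto_atTop
  · simpa using hys (φ n)

theorem HasFDerivWithinAt.mapsTo_posTangentConeAt {f : E → F} {f' : E →L[ℝ] F}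
    (h : HasFDerivWithinAt f f' s x) :
    MapsTo f' (posTangentConeAt s x) (posTangentConeAt (f '' s) (f x)) := by
  intro v hv
  obtain ⟨α, l, hl, c, d, hd₀, hds, hcd⟩ := exists_fun_of_mem_tangentConeAt hv
  apply mem_tangentConeAt_of_seq l c (fun n => f (x + d n) - f x)
  · rw [tendsto_sub_nhds_zero_iff]
    refine h.continuousWithinAt.tendsto.comp <| tendsto_nhdsWithin_iff.mpr ⟨?_, hds⟩
    simpa using tendsto_const_nhds.add hd₀
  · exact hds.mono fun n hn => ⟨x + d n, hn, by simp⟩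
  · simpa [NNReal.smul_def] using h.lim (c := fun n => (c n : ℝ)) hd₀ hds
      (by simpa [NNReal.smul_def] using hcd)

theorem posTangentConeAt_subset {K : Set E} (hK : IsClosed K)
    (hKsmul : ∀ c : NNReal, ∀ v ∈ K, c • v ∈ K) (hs : ∀ z ∈ s, z - x ∈ K) :
    posTangentConeAt s x ⊆ K := by
  intro v hv
  obtain ⟨α, l, hl, c, d, -, hds, hcd⟩ := exists_fun_of_mem_tangentConeAt hv
  exact hK.mem_of_tendsto hcd (hds.mono fun n hn => hKsmul _ _ (by simpa using hs _ hn))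

theorem HasFDerivWithinAt.eventually_apply_lt {ι : Type*} {f : E → ι → ℝ}
    {f' : E →L[ℝ] ι → ℝ} (h : HasFDerivWithinAt f f' s x) {v : E}
    (hv : ∀ᶠ t in 𝓝[>] (0 : ℝ), x + t • v ∈ s) {i : ι} (hi : f' v i < 0) :
    ∀ᶠ t in 𝓝[>] (0 : ℝ), f (x + t • v) i < f x i := by
  have hlim := h.lim (c := fun t : ℝ => t⁻¹) (d := fun t => t • v)
    (tendsto_nhdsWithin_of_tendsto_nhds
      (by simpa using (tendsto_id (x := 𝓝 (0 : ℝ))).smul_const v))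
    hv ((tendsto_const_nhds (x := v)).congr'
      (eventually_nhdsWithin_of_forall fun t (ht : 0 < t) => by
        simp only [smul_smul, inv_mul_cancel₀ ht.ne', one_smul]))
  filter_upwards [((continuous_apply i).tendsto _).comp hlim |>.eventually_lt_const hi,
    self_mem_nhdsWithin] with t ht htpos
  simp only [Function.comp_apply, Pi.smul_apply, Pi.sub_apply, smul_eq_mul] at ht
  exact sub_neg.mp (neg_of_mul_neg_right ht (inv_nonneg.mpr htpos.le))

end TangentCone

section GaleNikaido

variable {ι : Type*} [Fintype ι] [DecidableEq ι] {F : (ι → ℝ) → ι → ℝ} {x y : ι → ℝ}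
theorem not_accPt_of_isPMatrix {N : Matrix ι ι ℝ} (hN : N.IsPMatrix) {C : Set (ι → ℝ)}
    (hF : HasFDerivWithinAt F (toLin' N).toContinuousLinearMap C y) (hC : C ⊆ Icc y x)
    (hFC : ∀ z ∈ C, ∀ i, y i < x i → F z i ≤ F y i) : ¬AccPt y (𝓟 C) := by
  intro hacc
  obtain ⟨v, hv0, hv⟩ := exists_ne_zero_mem_posTangentConeAt hacc
  have hv_nonneg : 0 ≤ v := posTangentConeAt_subset isClosed_Ici
    (fun c v hv => smul_nonneg c.2 hv) (fun z hz => sub_nonneg.mpr (hC hz).1) hv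
  have hv_supp : ∀ i, ¬y i < x i → v i = 0 := by
    refine posTangentConeAt_subset (K := {v | ∀ i, ¬y i < x i → v i = 0}) ?_
      (fun c v hv i hi => by simp [hv i hi]) (fun z hz i hi => ?_) hv
    · simp only [ofPred_forall]
      exact isClosed_iInter fun i => isClosed_iInter fun _ =>
        isClosed_eq (continuous_apply i) continuous_const
    · have := hC hz
      simp only [Pi.sub_apply, sub_eq_zero]
      exact le_antisymm (le_trans (this.2 i) (not_lt.mp hi)) (this.1 i)
  have hNv : ∀ i, y i < x i → (N *ᵥ v) i ≤ 0 := by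
    refine posTangentConeAt_subset (K := {w | ∀ i, y i < x i → w i ≤ 0}) ?_
      (fun c w hw i hi => smul_nonpos_of_nonneg_of_nonpos c.2 (hw i hi)) ?_
      (hF.mapsTo_posTangentConeAt hv)
    · simp only [ofPred_forall]
      exact isClosed_iInter fun i => isClosed_iInter fun _ =>
        isClosed_le (continuous_apply i) continuous_const
    · rintro _ ⟨z, hz, rfl⟩ i hi
      exact sub_nonpos.mpr (hFC z hz i hi)
  obtain ⟨i, hvi, hNvi⟩ := hN.exists_pos_mulVec_pos hv_nonneg hv0
  by_cases hi : y i < x i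
  · exact (hNv i hi).not_gt hNvi
  · exact hvi.ne' (hv_supp i hi)

theorem exists_descent_direction {N : Matrix ι ι ℝ} (hN : N.IsPMatrix) {z : ι → ℝ} (hyx : y < x)
    (hz : z ∈ Icc y x) (hyz : ∀ i, y i < x i → y i < z i)
    (hF : HasFDerivWithinAt F (toLin' N).toContinuousLinearMap (Icc y x) z) :
    ∃ u : ι → ℝ, 0 < ∑ i, u i ∧
      ∀ᶠ t in 𝓝[>] (0 : ℝ), z - t • u ∈ Icc y x ∧ ∀ i, y i < x i → F (z - t • u) i < F z i := by
  obtain ⟨u, hu, huS, hNu⟩ := hN.exists_nonneg_mulVec_pos_on (Finset.univ.filter fun i => y i < x i)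
  simp only [Finset.mem_filter, Finset.mem_univ, true_and] at huS hNu
  obtain ⟨i₀, hi₀⟩ := (Pi.lt_def.mp hyx).2
  have hu0 : u ≠ 0 := fun h => by simpa [h] using hNu i₀ hi₀
  obtain ⟨j, hj⟩ := Function.ne_iff.mp hu0
  have hmem : ∀ᶠ t in 𝓝[>] (0 : ℝ), z - t • u ∈ Icc y x := by
    have hlow : ∀ i, ∀ᶠ t in 𝓝[>] (0 : ℝ), y i ≤ z i - t * u i := fun i => by
      by_cases hi : y i < x i
      · have hcont : Tendsto (fun t : ℝ => z i - t * u i) (𝓝[>] 0) (𝓝 (z i)) :=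
          tendsto_nhdsWithin_of_tendsto_nhds
            ((by fun_prop : Continuous fun t : ℝ => z i - t * u i).tendsto' 0 _ (by simp))
        exact (hcont.eventually_const_lt (hyz i hi)).mono fun t ht => ht.le
      · exact .of_forall fun t => by simp [huS i hi, hz.1 i]
    filter_upwards [eventually_all.mpr hlow, self_mem_nhdsWithin] with t ht htpos
    exact ⟨fun i => by simpa using ht i, fun i => by
      simpa using (sub_le_self _ (mul_nonneg (le_of_lt htpos) (hu i))).trans (hz.2 i)⟩
  refine ⟨u, Finset.sum_pos' (fun i _ => hu i) ⟨j, Finset.mem_univ _, (hu j).lt_of_ne' hj⟩,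
    hmem.and (eventually_all.mpr fun i => eventually_imp_distrib_left.mpr fun hi => ?_)⟩
  have := hF.eventually_apply_lt (v := -u) (by simpa [← sub_eq_add_neg] using hmem)
    (i := i) (by simpa [mulVec_neg] using hNu i hi)
  simpa [← sub_eq_add_neg] using this


variable {J : (ι → ℝ) → Matrix ι ι ℝ}

theorem exists_mem_sum_sub_eq (hyx : y < x)
    (hF : ∀ z ∈ Icc y x, HasFDerivWithinAt F (toLin' (J z)).toContinuousLinearMap (Icc y x) z)
    (hP : ∀ z ∈ Icc y x, (J z).IsPMatrix)
    (hstrict : ∀ z ∈ Icc y x, y < z → (∀ i, y i < x i → F z i ≤ F y i) →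
      ∀ i, y i < x i → y i < z i)
    (hFx : ∀ i, y i < x i → F x i ≤ F y i) {δ : ℝ} (hδ : 0 < δ) (hδx : δ ≤ ∑ i, (x i - y i)) :
    ∃ z ∈ Icc y x, (∀ i, y i < x i → F z i ≤ F y i) ∧ ∑ i, (z i - y i) = δ := by
  have hφ : Continuous fun z : ι → ℝ => ∑ i, (z i - y i) := by fun_prop
  set D := Icc y x ∩ F ⁻¹' {w | ∀ i, y i < x i → w i ≤ F y i} ∩ {z | δ ≤ ∑ i, (z i - y i)}
  have hD : IsCompact D := by
    refine isCompact_Icc.of_isClosed_subset (IsClosed.inter ?_ (isClosed_le continuous_const hφ))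
      fun z hz => hz.1.1
    refine ContinuousOn.preimage_isClosed_of_isClosed (fun z hz => (hF z hz).continuousWithinAt)
      isClosed_Icc ?_
    simp only [ofPred_forall]
    exact isClosed_iInter fun i => isClosed_iInter fun _ =>
      isClosed_le (continuous_apply i) continuous_const
  obtain ⟨z, ⟨⟨hz, hFz⟩, hδz⟩, hmin⟩ :=
    hD.exists_isMinOn ⟨x, ⟨⟨⟨hyx.le, le_rfl⟩, hFx⟩, hδx⟩⟩ hφ.continuousOn
  refine ⟨z, hz, hFz, le_antisymm (not_lt.mp fun hlt => ?_) hδz⟩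
  have hyz : y < z := lt_of_le_of_ne hz.1 fun h => by simp [← h] at hlt; linarith
  obtain ⟨u, hu, hev⟩ :=
    exists_descent_direction (hP z hz) hyx hz (hstrict z hz hyz hFz) (hF z hz)
  have hsum : ∀ t : ℝ, ∑ i, ((z - t • u) i - y i) = ∑ i, (z i - y i) - t * ∑ i, u i := fun t => by
    simp only [Pi.sub_apply, Pi.smul_apply, smul_eq_mul, Finset.mul_sum, ← Finset.sum_sub_distrib]
    exact Finset.sum_congr rfl fun i _ => by ring
  have hnear : ∀ᶠ t in 𝓝[>] (0 : ℝ), δ < ∑ i, (z i - y i) - t * ∑ i, u i :=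
    tendsto_nhdsWithin_of_tendsto_nhds
      ((by fun_prop : Continuous fun t : ℝ => ∑ i, (z i - y i) - t * ∑ i, u i).tendsto' 0 _
        (by simp)) |>.eventually_const_lt hlt
  obtain ⟨t, ⟨hmem, hFt⟩, hδt, ht⟩ := (hev.and (hnear.and self_mem_nhdsWithin)).exists
  have := isMinOn_iff.mp hmin (z - t • u)
    ⟨⟨hmem, fun i hi => (hFt i hi).le.trans (hFz i hi)⟩, (hsum t).ge.trans' hδt.le⟩
  rw [hsum] at this
  nlinarith [mul_pos (show 0 < t from ht) hu]

theorem accPt_sublevel (hyx : y < x)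
    (hF : ∀ z ∈ Icc y x, HasFDerivWithinAt F (toLin' (J z)).toContinuousLinearMap (Icc y x) z)
    (hP : ∀ z ∈ Icc y x, (J z).IsPMatrix)
    (hstrict : ∀ z ∈ Icc y x, y < z → (∀ i, y i < x i → F z i ≤ F y i) →
      ∀ i, y i < x i → y i < z i)
    (hFx : ∀ i, y i < x i → F x i ≤ F y i) :
    AccPt y (𝓟 {z ∈ Icc y x | ∀ i, y i < x i → F z i ≤ F y i}) := by
  rw [accPt_iff_nhds]
  intro U hU
  obtain ⟨ε, hε, hball⟩ := Metric.mem_nhds_iff.mp hU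
  obtain ⟨i₀, hi₀⟩ := (Pi.lt_def.mp hyx).2
  have hxy : 0 < ∑ i, (x i - y i) := Finset.sum_pos' (fun i _ => sub_nonneg.mpr (hyx.le i))
    ⟨i₀, Finset.mem_univ _, sub_pos.mpr hi₀⟩
  obtain ⟨z, hz, hFz, hsum⟩ :=
    exists_mem_sum_sub_eq hyx hF hP hstrict hFx (lt_min (half_pos hε) hxy) (min_le_right _ _)
  have hyz : ∀ i, 0 ≤ z i - y i := fun i => sub_nonneg.mpr (hz.1 i)
  have hnorm : ‖z - y‖ ≤ ∑ i, (z i - y i) :=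
    (pi_norm_le_iff_of_nonneg (Finset.sum_nonneg fun i _ => hyz i)).mpr fun i => by
      rw [Pi.sub_apply, Real.norm_of_nonneg (hyz i)]
      exact Finset.single_le_sum (fun j _ => hyz j) (Finset.mem_univ i)
  refine ⟨z, ⟨hball ?_, hz, hFz⟩, fun h => ?_⟩
  · rw [Metric.mem_ball, dist_eq_norm]
    exact hnorm.trans_lt (hsum ▸ (min_le_left _ _).trans_lt (half_lt_self hε))
  · subst h
    simp only [sub_self, Finset.sum_const_zero] at hsum
    exact (lt_min (half_pos hε) hxy).ne hsum

theorem exists_lt_and_apply_lt_of_isPMatrix {Θ : Set (ι → ℝ)} (hΘ : Θ.OrdConnected)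
    (hF : ∀ θ ∈ Θ, HasFDerivWithinAt F (toLin' (J θ)).toContinuousLinearMap Θ θ)
    (hP : ∀ θ ∈ Θ, (J θ).IsPMatrix) (hx : x ∈ Θ) (hy : y ∈ Θ) (hyx : y < x) :
    ∃ i, y i < x i ∧ F y i < F x i := by
  induction hn : (Finset.univ.filter fun i => y i < x i).card using Nat.strong_induction_on
    generalizing x with
  | _ n ih =>
  by_contra! hFx
  have hyxΘ : Icc y x ⊆ Θ := hΘ.out hy hx
  refine not_accPt_of_isPMatrix (hP y hy) ((hF y hy).mono fun z hz => hyxΘ hz.1)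
    (fun z hz => hz.1) (fun z hz => hz.2) (accPt_sublevel hyx
      (fun z hz => (hF z (hyxΘ hz)).mono hyxΘ) (fun z hz => hP z (hyxΘ hz)) ?_ hFx)
  intro z hz hyz hFz
  by_contra! hzx
  obtain ⟨i, hix, hiz⟩ := hzx
  have hsub : (Finset.univ.filter fun i => y i < z i) ⊂ Finset.univ.filter fun i => y i < x i :=
    (Finset.ssubset_iff_of_subset fun j hj => by
      simp only [Finset.mem_filter, Finset.mem_univ, true_and] at hj ⊢
      exact hj.trans_le (hz.2 j)).mpr ⟨i, by simpa using hix, by simpa using hiz⟩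
  obtain ⟨j, hjz, hFj⟩ := ih _ (hn ▸ Finset.card_lt_card hsub) (hyxΘ hz) hyz rfl
  exact (hFz j (hjz.trans_le (hz.2 j))).not_gt hFj

theorem ordConnected_preimage_diagonal_mulVec {I : ι → Set ℝ} (hI : ∀ i, (I i).OrdConnected)
    (σ : ι → ℝ) : ((diagonal σ *ᵥ ·) ⁻¹' univ.pi I).OrdConnected := by
  have : (diagonal σ *ᵥ ·) ⁻¹' univ.pi I = univ.pi fun i => (σ i * ·) ⁻¹' I i := by
    ext z
    simp [mulVec_diagonal]
  rw [this]
  refine ordConnected_pi fun i _ => ?_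
  rcases le_total 0 (σ i) with h | h
  · exact (hI i).preimage_mono (monotone_mul_left_of_nonneg h)
  · exact (hI i).preimage_anti fun a b hab => mul_le_mul_of_nonpos_left hab h

theorem HasFDerivWithinAt.mulVec_comp_mulVec {D N : Matrix ι ι ℝ} {s : Set (ι → ℝ)}
    {θ : ι → ℝ} (h : HasFDerivWithinAt F (toLin' N).toContinuousLinearMap s (D *ᵥ θ)) :
    HasFDerivWithinAt (fun θ => D *ᵥ F (D *ᵥ θ)) (toLin' (D * N * D)).toContinuousLinearMap
      ((D *ᵥ ·) ⁻¹' s) θ := by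
  set R := (toLin' D).toContinuousLinearMap
  refine (R.hasFDerivAt.comp_hasFDerivWithinAt θ
    (h.comp θ R.hasFDerivWithinAt (mapsTo_preimage R _))).congr_fderiv ?_
  ext v i
  simp [R, mulVec_mulVec]

theorem exists_sub_mul_sub_pos_of_isPMatrix {I : ι → Set ℝ} (hI : ∀ i, (I i).OrdConnected)
    (hF : ∀ θ ∈ univ.pi I,
      HasFDerivWithinAt F (toLin' (J θ)).toContinuousLinearMap (univ.pi I) θ)
    (hP : ∀ θ ∈ univ.pi I, (J θ).IsPMatrix) (hx : x ∈ univ.pi I) (hy : y ∈ univ.pi I)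
    (hxy : x ≠ y) : ∃ i, 0 < (x i - y i) * (F x i - F y i) := by
  set σ : ι → ℝ := fun i => if y i ≤ x i then 1 else -1
  have hσ : ∀ i, σ i * σ i = 1 := fun i => by by_cases h : y i ≤ x i <;> simp [σ, h]
  set D := diagonal σ
  have hD : ∀ z i, (D *ᵥ z) i = σ i * z i := fun z i => mulVec_diagonal σ z i
  have hDD : ∀ z, D *ᵥ (D *ᵥ z) = z := fun z => by
    ext i
    simp [hD, ← mul_assoc, hσ]
  have hle : D *ᵥ y ≤ D *ᵥ x := fun i => by
    by_cases h : y i ≤ x i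
    · simp [hD, σ, h]
    · simpa [hD, σ, h] using (not_le.mp h).le
  obtain ⟨i, hyi, hFi⟩ := exists_lt_and_apply_lt_of_isPMatrix
    (F := fun θ => D *ᵥ F (D *ᵥ θ)) (J := fun θ => D * J (D *ᵥ θ) * D)
    (ordConnected_preimage_diagonal_mulVec hI σ) (fun θ hθ => (hF _ hθ).mulVec_comp_mulVec)
    (fun θ hθ => (hP _ hθ).diagonal_mul_mul_diagonal fun i h => by simpa [h] using hσ i)
    (by rwa [mem_preimage, hDD]) (by rwa [mem_preimage, hDD])
    (lt_of_le_of_ne hle fun h => hxy (by rw [← hDD x, ← hDD y, h]))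
  simp only [hDD, hD] at hyi hFi
  refine ⟨i, ?_⟩
  calc 0 < (σ i * x i - σ i * y i) * (σ i * F x i - σ i * F y i) :=
        mul_pos (sub_pos.mpr hyi) (sub_pos.mpr hFi)
    _ = (x i - y i) * (F x i - F y i) := by
        linear_combination ((x i - y i) * (F x i - F y i)) * hσ i

end GaleNikaido

theorem gale_nikaido_injective_general (m : ℕ)
    (I : Fin m → Set ℝ) (hIconn : ∀ i, (I i).OrdConnected)
    (F : (Fin m → ℝ) → (Fin m → ℝ)) (J : (Fin m → ℝ) → Matrix (Fin m) (Fin m) ℝ)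
    (hF : ∀ θ ∈ Set.univ.pi I,
      HasFDerivWithinAt F (Matrix.toLin' (J θ)).toContinuousLinearMap
        (Set.univ.pi I) θ)
    (hP : ∀ θ ∈ Set.univ.pi I, ∀ s : Finset (Fin m), s.Nonempty →
      0 < ((J θ).submatrix (fun i : s => (i : Fin m)) (fun j : s => (j : Fin m))).det) :
    Set.InjOn F (Set.univ.pi I) := by
  intro x hx y hy hxy
  by_contra hne
  obtain ⟨i, hi⟩ := exists_sub_mul_sub_pos_of_isPMatrix hIconn hF hP hx hy hne
  simp [hxy] at hi

/-- Gale–Nikaido: a C¹ map on a closed rectangle whose Jacobian is everywhere a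
P-matrix is injective. -/
theorem gale_nikaido_injective (m : ℕ)
    (I : Fin m → Set ℝ) (hIc : ∀ i, IsClosed (I i)) (hIconn : ∀ i, (I i).OrdConnected)
    (F : (Fin m → ℝ) → (Fin m → ℝ)) (J : (Fin m → ℝ) → Matrix (Fin m) (Fin m) ℝ)
    (hF : ∀ θ ∈ Set.univ.pi I,
      HasFDerivWithinAt F (Matrix.toLin' (J θ)).toContinuousLinearMap
        (Set.univ.pi I) θ)
    (hFcont : ContinuousOn (fun θ => J θ) (Set.univ.pi I))
    (hP : ∀ θ ∈ Set.univ.pi I, ∀ s : Finset (Fin m), s.Nonempty →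
      0 < ((J θ).submatrix (fun i : s => (i : Fin m)) (fun j : s => (j : Fin m))).det) :
    Set.InjOn F (Set.univ.pi I) :=
  gale_nikaido_injective_general m I hIconn F J hF hP
end

section
/- For λ > 0 and H ∈ (0,1), as t → 0 we have cosh(λt) − (1/Γ(2H)) ∫_0^{λt} s^{2H-1} cosh(λt−s) ds = 1 − (λt)^{2H}/Γ(2H+1) + O(t^{min(2, 2H+1)}). -/
open Real Asymptotics Filter

lemma cosh_sub_one_le_sq {x : ℝ} (hx : |x| ≤ 1) : Real.cosh x - 1 ≤ x ^ 2 := by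
  have h1 : Real.cosh x ≤ Real.exp (x ^ 2 / 2) := Real.cosh_le_exp_half_sq x
  have hx2 : x ^ 2 ≤ 1 := by nlinarith [abs_nonneg x, sq_abs x]
  have hy0 : (0:ℝ) ≤ x ^ 2 / 2 := by positivity
  have h2 : Real.exp (x ^ 2 / 2) ≤ 1 / (1 - x ^ 2 / 2) :=
    Real.exp_bound_div_one_sub_of_interval hy0 (by linarith)
  have h3 : 1 / (1 - x ^ 2 / 2) ≤ 1 + x ^ 2 := by
    rw [div_le_iff₀ (by linarith)]; nlinarith
  linarith

/-- Small-time expansion of the fOU autocovariance kernel: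
cosh(λt) − (1/Γ(2H)) ∫_0^{λt} s^{2H−1} cosh(λt−s) ds
  = 1 − (λt)^{2H}/Γ(2H+1) + O(t^{min(2,2H+1)}) as t ↓ 0. -/
theorem fOU_autocov_small_time (lam H : ℝ) (hlam : 0 < lam)
    (hH : H ∈ Set.Ioo (0:ℝ) 1) :
    (fun t : ℝ =>
        (Real.cosh (lam * t)
            - (1 / Real.Gamma (2 * H)) *
                ∫ s in (0:ℝ)..(lam * t), s ^ (2 * H - 1) * Real.cosh (lam * t - s))
          - (1 - (lam * t) ^ (2 * H) / Real.Gamma (2 * H + 1)))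
      =O[nhdsWithin 0 (Set.Ioi 0)] (fun t : ℝ => t ^ (min 2 (2 * H + 1))) := by
  obtain ⟨hH0, hH1⟩ := hH
  have h2H : 0 < 2 * H := by linarith
  have hG : 0 < Real.Gamma (2 * H) := Real.Gamma_pos_of_pos h2H
  have hG1 : Real.Gamma (2 * H + 1) = 2 * H * Real.Gamma (2 * H) :=
    Real.Gamma_add_one (ne_of_gt h2H)
  have hG1pos : 0 < Real.Gamma (2 * H + 1) := by rw [hG1]; positivity
  set m := min 2 (2 * H + 1) with hm
  have hm2 : m ≤ 2 := min_le_left _ _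
  have hmH : m ≤ 2 * H + 1 := min_le_right _ _
  rw [isBigO_iff]
  refine ⟨(1 + 1 / Real.Gamma (2 * H + 1)) * lam ^ m, ?_⟩
  filter_upwards [Ioo_mem_nhdsGT_of_mem
    (Set.left_mem_Ico.2 (by positivity : (0:ℝ) < 1 / lam))] with t ht
  obtain ⟨ht0, ht1⟩ := ht
  set u := lam * t with hu
  have hu0 : 0 < u := mul_pos hlam ht0
  have hu1 : u ≤ 1 := by
    rw [hu]
    calc lam * t ≤ lam * (1 / lam) := by nlinarith
    _ = 1 := by field_simp
  -- integrability
  have hint1 : IntervalIntegrable (fun s : ℝ => s ^ (2 * H - 1)) MeasureTheory.volume 0 u :=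
    intervalIntegral.intervalIntegrable_rpow' (by linarith)
  have hcont : ContinuousOn (fun s : ℝ => Real.cosh (u - s)) (Set.uIcc 0 u) :=
    (Real.continuous_cosh.comp (continuous_const.sub continuous_id)).continuousOn
  have hint2 : IntervalIntegrable (fun s : ℝ => s ^ (2 * H - 1) * Real.cosh (u - s))
      MeasureTheory.volume 0 u := hint1.mul_continuousOn hcont
  have hint3 : IntervalIntegrable (fun s : ℝ => s ^ (2 * H - 1) * (Real.cosh (u - s) - 1))
      MeasureTheory.volume 0 u := by
    have h := hint2.sub hint1
    have heq : (fun s : ℝ => s ^ (2 * H - 1) * (Real.cosh (u - s) - 1))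
        = fun s : ℝ => s ^ (2 * H - 1) * Real.cosh (u - s) - s ^ (2 * H - 1) := by
      funext s; ring
    rw [heq]; exact h
  have hint4 : IntervalIntegrable (fun s : ℝ => s ^ (2 * H - 1) * u ^ 2)
      MeasureTheory.volume 0 u := hint1.mul_const _
  have hpow : (∫ s in (0:ℝ)..u, s ^ (2 * H - 1)) = u ^ (2 * H) / (2 * H) := by
    rw [integral_rpow (Or.inl (by linarith))]
    have h1 : 2 * H - 1 + 1 = 2 * H := by ring
    rw [h1, Real.zero_rpow (ne_of_gt h2H)]
    ring
  have hsplit : (∫ s in (0:ℝ)..u, s ^ (2 * H - 1) * Real.cosh (u - s))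
      = u ^ (2 * H) / (2 * H)
        + ∫ s in (0:ℝ)..u, s ^ (2 * H - 1) * (Real.cosh (u - s) - 1) := by
    rw [← hpow, ← intervalIntegral.integral_add hint1 hint3]
    congr 1; funext s; ring
  set E := ∫ s in (0:ℝ)..u, s ^ (2 * H - 1) * (Real.cosh (u - s) - 1) with hE
  have hE0 : 0 ≤ E := by
    apply intervalIntegral.integral_nonneg (le_of_lt hu0)
    intro s hs
    have h1 : 0 ≤ s ^ (2 * H - 1) := Real.rpow_nonneg hs.1 _
    have h2 : 1 ≤ Real.cosh (u - s) := Real.one_le_cosh _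
    nlinarith
  have hmul : u ^ (2:ℕ) * u ^ (2 * H) = u ^ (2 * H + 2) := by
    rw [← Real.rpow_natCast u 2, ← Real.rpow_add hu0]
    norm_num; ring_nf
  have hEle : E ≤ u ^ (2 * H + 2) / (2 * H) := by
    have hmono : E ≤ ∫ s in (0:ℝ)..u, s ^ (2 * H - 1) * u ^ 2 := by
      apply intervalIntegral.integral_mono_on (le_of_lt hu0) hint3 hint4
      intro s hs
      have h1 : 0 ≤ s ^ (2 * H - 1) := Real.rpow_nonneg hs.1 _
      have habs : |u - s| ≤ 1 := by
        rw [abs_le]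
        exact ⟨by linarith [hs.2, hu1], by linarith [hs.1, hu1]⟩
      have h2 : Real.cosh (u - s) - 1 ≤ (u - s) ^ 2 := cosh_sub_one_le_sq habs
      have h3 : (u - s) ^ 2 ≤ u ^ 2 := by nlinarith [hs.1, hs.2]
      nlinarith
    calc E ≤ ∫ s in (0:ℝ)..u, s ^ (2 * H - 1) * u ^ 2 := hmono
      _ = (∫ s in (0:ℝ)..u, s ^ (2 * H - 1)) * u ^ 2 := by
          rw [intervalIntegral.integral_mul_const]
      _ = u ^ (2 * H + 2) / (2 * H) := by
          rw [hpow, ← hmul]; push_cast; ring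
  have hcosh0 : 1 ≤ Real.cosh u := Real.one_le_cosh u
  have hcosh : Real.cosh u - 1 ≤ u ^ 2 := by
    apply cosh_sub_one_le_sq
    rw [abs_of_nonneg (le_of_lt hu0)]; exact hu1
  have hexpr : Real.cosh u
      - (1 / Real.Gamma (2 * H)) * (∫ s in (0:ℝ)..u, s ^ (2 * H - 1) * Real.cosh (u - s))
      - (1 - u ^ (2 * H) / Real.Gamma (2 * H + 1))
      = (Real.cosh u - 1) - E / Real.Gamma (2 * H) := by
    rw [hsplit, hG1]
    field_simp
    ring
  have hu2m : u ^ 2 ≤ u ^ m := by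
    rw [show u ^ 2 = u ^ ((2:ℕ):ℝ) from (Real.rpow_natCast u 2).symm]
    exact Real.rpow_le_rpow_of_exponent_ge hu0 hu1 (by push_cast; exact hm2)
  have huHm : u ^ (2 * H + 2) ≤ u ^ m :=
    Real.rpow_le_rpow_of_exponent_ge hu0 hu1 (by linarith)
  have hEm : E ≤ u ^ m / (2 * H) := by
    refine le_trans hEle ?_
    gcongr
  have h2 : E / Real.Gamma (2 * H) ≤ u ^ m / Real.Gamma (2 * H + 1) := by
    calc E / Real.Gamma (2 * H) ≤ (u ^ m / (2 * H)) / Real.Gamma (2 * H) := by gcongr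
      _ = u ^ m / Real.Gamma (2 * H + 1) := by rw [div_div, hG1]
  have hEG0 : 0 ≤ E / Real.Gamma (2 * H) := by positivity
  have hub : |Real.cosh u
      - (1 / Real.Gamma (2 * H)) * (∫ s in (0:ℝ)..u, s ^ (2 * H - 1) * Real.cosh (u - s))
      - (1 - u ^ (2 * H) / Real.Gamma (2 * H + 1))|
      ≤ (1 + 1 / Real.Gamma (2 * H + 1)) * u ^ m := by
    rw [hexpr]
    calc |(Real.cosh u - 1) - E / Real.Gamma (2 * H)|
        ≤ |Real.cosh u - 1| + |E / Real.Gamma (2 * H)| := abs_sub _ _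
      _ = (Real.cosh u - 1) + E / Real.Gamma (2 * H) := by
          rw [abs_of_nonneg (by linarith), abs_of_nonneg hEG0]
      _ ≤ u ^ m + u ^ m / Real.Gamma (2 * H + 1) := by
          have : Real.cosh u - 1 ≤ u ^ m := le_trans hcosh hu2m
          linarith
      _ = (1 + 1 / Real.Gamma (2 * H + 1)) * u ^ m := by ring
  have htm : |t ^ m| = t ^ m := abs_of_nonneg (Real.rpow_nonneg ht0.le m)
  have hum : u ^ m = lam ^ m * t ^ m := by
    rw [hu, Real.mul_rpow hlam.le ht0.le]
  rw [Real.norm_eq_abs, Real.norm_eq_abs, htm]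
  calc |Real.cosh u
      - (1 / Real.Gamma (2 * H)) * (∫ s in (0:ℝ)..u, s ^ (2 * H - 1) * Real.cosh (u - s))
      - (1 - u ^ (2 * H) / Real.Gamma (2 * H + 1))|
      ≤ (1 + 1 / Real.Gamma (2 * H + 1)) * u ^ m := hub
    _ = (1 + 1 / Real.Gamma (2 * H + 1)) * lam ^ m * (t ^ m) := by rw [hum]; ring
end
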